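/- arXiv:1303.5611 — 2 statements merged into one kernel-verified Lean document; each statement's English description precedes it below -/
import Mathlib

section
/- In the Gale duality setup, let I₁, I₂ ⊆ 𝔇 and J₁, J₂ ⊆ ℜ, set δ_k := cone({e_D : D ∈ I_k∪J_k}) ⊆ E and τ_k := cone(φ({e_D : D ∈ I_k^c∪J_k^c})) ⊆ K_ℚ for k = 1, 2. Then there exists a linear form e on E vanishing on ker ψ with e ≥ 0 on δ₁, e ≤ 0 on δ₂, and δ₁ ∩ ker e = δ₁ ∩ δ₂ = δ₂ ∩ ker e, if and only if the relative interiors of τ₁ and τ₂ have nonempty intersection. -/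
open Set

/-- The convex cone generated by a set `S`: all finite nonnegative combinations. -/
def coneHull (k : Type*) [Field k] [LinearOrder k] [IsStrictOrderedRing k] {W : Type*} [AddCommGroup W] [Module k W]
    (S : Set W) : Set W :=
  {x | ∃ (n : ℕ) (c : Fin n → k) (v : Fin n → W),
    (∀ i, 0 ≤ c i) ∧ (∀ i, v i ∈ S) ∧ x = ∑ i, c i • v i}

/-- The relative interior of a convex cone `C` (algebraic characterization, valid over `ℚ`). -/
def coneRelint (k : Type*) [Field k] [LinearOrder k] [IsStrictOrderedRing k] {W : Type*} [AddCommGroup W] [Module k W]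
    (C : Set W) : Set W :=
  {x ∈ C | ∀ y ∈ C, ∃ ε : k, 0 < ε ∧ x - ε • y ∈ C}

/-- The set `{e_D : D ∈ I ∪ J}` of standard basis vectors of `E = ℚ^(𝔇 ⊔ ℜ)`. -/
def genSet {𝔇 ℜ : Type*} [DecidableEq 𝔇] [DecidableEq ℜ] (I : Set 𝔇) (J : Set ℜ) :
    Set ((𝔇 ⊕ ℜ) → ℚ) :=
  (fun D : 𝔇 => Pi.single (Sum.inl D) (1 : ℚ)) '' I ∪
    (fun Y : ℜ => Pi.single (Sum.inr Y) (1 : ℚ)) '' J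

/-- The (core) Gale duality setup: `ψ : ℚ^(𝔇⊔ℜ) → N` and `φ : ℚ^(𝔇⊔ℜ) → K` are
surjective linear maps whose kernels are orthogonal complements of each other w.r.t. the
standard inner product on `E = ℚ^(𝔇⊔ℜ)`. -/
structure GaleSetup (𝔇 ℜ N K : Type*) [Fintype 𝔇] [Fintype ℜ]
    [DecidableEq 𝔇] [DecidableEq ℜ]
    [AddCommGroup N] [Module ℚ N] [FiniteDimensional ℚ N]
    [AddCommGroup K] [Module ℚ K] [FiniteDimensional ℚ K] where
  ψ : ((𝔇 ⊕ ℜ) → ℚ) →ₗ[ℚ] N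
  φ : ((𝔇 ⊕ ℜ) → ℚ) →ₗ[ℚ] K
  ψ_surj : Function.Surjective ψ
  φ_surj : Function.Surjective φ
  ker_dual : ∀ x : (𝔇 ⊕ ℜ) → ℚ,
    x ∈ LinearMap.ker φ ↔ ∀ y ∈ LinearMap.ker ψ, ∑ d : 𝔇 ⊕ ℜ, x d * y d = 0

section Aux
variable {W : Type*} [AddCommGroup W] [Module ℚ W]

lemma sum_mem_coneHull {T : Set W} {β : Type*} (t : Finset β) (c : β → ℚ) (f : β → W)
    (hc : ∀ a ∈ t, 0 ≤ c a) (hf : ∀ a ∈ t, f a ∈ T) :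
    (∑ a ∈ t, c a • f a) ∈ coneHull ℚ T := by
  refine ⟨t.card, fun i => c (t.equivFin.symm i), fun i => f (t.equivFin.symm i),
    fun i => hc _ (t.equivFin.symm i).2, fun i => hf _ (t.equivFin.symm i).2, ?_⟩
  rw [← Finset.sum_coe_sort t (fun a => c a • f a),
    ← Equiv.sum_comp t.equivFin.symm (fun a : t => c (a : β) • f (a : β))]

lemma mem_coneHull_single_iff {α : Type*} [Fintype α] [DecidableEq α] (S : Set α) (x : α → ℚ) :
    x ∈ coneHull ℚ ((fun d => Pi.single d (1:ℚ)) '' S) ↔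
      (∀ d, 0 ≤ x d) ∧ ∀ d, d ∉ S → x d = 0 := by
  classical
  constructor
  · rintro ⟨n, c, v, hc, hv, rfl⟩
    choose dd hdd hval using hv
    constructor
    · intro d
      rw [Finset.sum_apply]
      refine Finset.sum_nonneg fun i _ => ?_
      simp only [← hval i, Pi.smul_apply, Pi.single_apply, smul_eq_mul]
      split <;> simp [hc i]
    · intro d hd
      rw [Finset.sum_apply]
      refine Finset.sum_eq_zero fun i _ => ?_
      simp only [← hval i, Pi.smul_apply, Pi.single_apply, smul_eq_mul]
      rw [if_neg, mul_zero]
      intro h; exact hd (h ▸ hdd i)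
  · rintro ⟨h1, h2⟩
    have hrep : x = ∑ d ∈ Finset.univ.filter (· ∈ S), x d • (Pi.single d (1:ℚ) : α → ℚ) := by
      funext a
      rw [Finset.sum_apply]
      simp only [Pi.smul_apply, Pi.single_apply, smul_eq_mul, mul_ite, mul_one, mul_zero]
      rw [Finset.sum_ite_eq (Finset.univ.filter (· ∈ S)) a (fun d => x d)]
      by_cases ha : a ∈ S <;> simp [ha, h2 a]
    rw [hrep]
    exact sum_mem_coneHull _ _ _ (fun a _ => h1 a)
      (fun a ha => ⟨a, by simpa using (Finset.mem_filter.mp ha).2, rfl⟩)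

lemma coneHull_image {V : Type*} [AddCommGroup V] [Module ℚ V]
    (f : V →ₗ[ℚ] W) (T : Set V) : coneHull ℚ (f '' T) = f '' coneHull ℚ T := by
  ext x
  constructor
  · rintro ⟨n, c, v, hc, hv, rfl⟩
    choose g hg hgv using hv
    refine ⟨∑ i, c i • g i, ⟨n, c, g, hc, hg, rfl⟩, ?_⟩
    simp [map_sum, map_smul, hgv]
  · rintro ⟨u, ⟨n, c, v, hc, hv, rfl⟩, rfl⟩
    exact ⟨n, c, f ∘ v, hc, fun i => ⟨v i, hv i, rfl⟩, by simp [map_sum, map_smul]⟩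

lemma exists_pos_scale {α : Type*} [Fintype α] (u v : α → ℚ)
    (hu : ∀ d, 0 ≤ u d) (hv : ∀ d, 0 ≤ v d) (h : ∀ d, v d ≠ 0 → 0 < u d) :
    ∃ ε : ℚ, 0 < ε ∧ ∀ d, ε * v d ≤ u d := by
  classical
  by_cases hs : (Finset.univ.filter fun d => v d ≠ 0).Nonempty
  · set s := Finset.univ.filter fun d => v d ≠ 0 with hs_def
    have hmem : ∀ d ∈ s, v d ≠ 0 := fun d hd => (Finset.mem_filter.mp hd).2
    refine ⟨s.inf' hs (fun d => u d / v d), ?_, ?_⟩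
    · rw [Finset.lt_inf'_iff]
      intro d hd
      exact div_pos (h d (hmem d hd)) ((hv d).lt_of_ne (Ne.symm (hmem d hd)))
    · intro d
      by_cases hd : v d = 0
      · simpa [hd] using hu d
      · have h1 : s.inf' hs (fun d => u d / v d) ≤ u d / v d :=
          Finset.inf'_le _ (by simp [hs_def, hd])
        have hvd : 0 < v d := (hv d).lt_of_ne (Ne.symm hd)
        rw [le_div_iff₀ hvd] at h1
        exact h1
  · refine ⟨1, one_pos, fun d => ?_⟩
    have : v d = 0 := by
      by_contra hd
      exact hs ⟨d, by simp [hd]⟩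
    simpa [this] using hu d

end Aux

section Aux2
variable {α K : Type*} [Fintype α] [DecidableEq α] [AddCommGroup K] [Module ℚ K]

lemma mem_coneHull_phi_iff (φ : (α → ℚ) →ₗ[ℚ] K) (S : Set α) (x : K) :
    x ∈ coneHull ℚ (φ '' ((fun d => Pi.single d (1:ℚ)) '' Sᶜ)) ↔
      ∃ u : α → ℚ, (∀ d, 0 ≤ u d) ∧ (∀ d ∈ S, u d = 0) ∧ x = φ u := by
  rw [coneHull_image]
  constructor
  · rintro ⟨u, hu, rfl⟩
    rw [mem_coneHull_single_iff] at hu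
    exact ⟨u, hu.1, fun d hd => hu.2 d (by simpa using hd), rfl⟩
  · rintro ⟨u, h1, h2, rfl⟩
    exact ⟨u, (mem_coneHull_single_iff _ _).mpr ⟨h1, fun d hd => h2 d (by simpa using hd)⟩, rfl⟩

lemma mem_coneRelint_phi_iff (φ : (α → ℚ) →ₗ[ℚ] K) (S : Set α) (x : K) :
    x ∈ coneRelint ℚ (coneHull ℚ (φ '' ((fun d => Pi.single d (1:ℚ)) '' Sᶜ))) ↔
      ∃ u : α → ℚ, (∀ d, d ∉ S → 0 < u d) ∧ (∀ d ∈ S, u d = 0) ∧ x = φ u := by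
  classical
  constructor
  · rintro ⟨hx, hrel⟩
    set u₁ : α → ℚ := fun d => if d ∈ S then 0 else 1 with hu₁
    have hmem : φ u₁ ∈ coneHull ℚ (φ '' ((fun d => Pi.single d (1:ℚ)) '' Sᶜ)) :=
      (mem_coneHull_phi_iff φ S _).mpr
        ⟨u₁, fun d => by by_cases hd : d ∈ S <;> simp [hu₁, hd],
          fun d hd => by simp [hu₁, hd], rfl⟩
    obtain ⟨ε, hε, hmem2⟩ := hrel (φ u₁) hmem
    obtain ⟨u₀, h01, h02, h03⟩ := (mem_coneHull_phi_iff φ S _).mp hmem2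
    refine ⟨u₀ + ε • u₁, ?_, ?_, ?_⟩
    · intro d hd
      have := h01 d
      simp only [Pi.add_apply, Pi.smul_apply, hu₁, if_neg hd, smul_eq_mul, mul_one]
      linarith
    · intro d hd
      simp [hu₁, hd, h02 d hd]
    · have hx2 : x = (x - ε • φ u₁) + ε • φ u₁ := by abel
      rw [hx2, h03, ← map_smul, ← map_add]
  · rintro ⟨u, h1, h2, rfl⟩
    have hunn : ∀ d, 0 ≤ u d := by
      intro d
      by_cases hd : d ∈ S
      · simp [h2 d hd]
      · exact (h1 d hd).le
    refine ⟨(mem_coneHull_phi_iff φ S _).mpr ⟨u, hunn, h2, rfl⟩, ?_⟩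
    intro y hy
    obtain ⟨v, hv1, hv2, rfl⟩ := (mem_coneHull_phi_iff φ S _).mp hy
    obtain ⟨ε, hε, hle⟩ := exists_pos_scale u v hunn hv1
      (fun d hd => h1 d (fun hmem => hd (hv2 d hmem)))
    refine ⟨ε, hε, (mem_coneHull_phi_iff φ S _).mpr ⟨u - ε • v, ?_, ?_, ?_⟩⟩
    · intro d
      simp only [Pi.sub_apply, Pi.smul_apply, smul_eq_mul]
      linarith [hle d]
    · intro d hd
      simp [h2 d hd, hv2 d hd]
    · rw [map_sub, map_smul]

end Aux2

section Repr
variable {α : Type*} [Fintype α] [DecidableEq α]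

lemma pi_repr (x : α → ℚ) : x = ∑ d, x d • (Pi.single d 1 : α → ℚ) := by
  funext a
  rw [Finset.sum_apply]
  simp [Pi.single_apply, mul_ite]

lemma linearMap_pi_apply {M : Type*} [AddCommGroup M] [Module ℚ M]
    (e : (α → ℚ) →ₗ[ℚ] M) (x : α → ℚ) :
    e x = ∑ d, x d • e (Pi.single d 1) := by
  conv_lhs => rw [pi_repr x]
  rw [map_sum]
  simp

lemma single_mem_coneHull (S : Set α) {d : α} (hd : d ∈ S) :
    (Pi.single d 1 : α → ℚ) ∈ coneHull ℚ ((fun d => Pi.single d (1:ℚ)) '' S) := by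
  rw [mem_coneHull_single_iff]
  refine ⟨fun a => ?_, fun a ha => ?_⟩
  · rw [Pi.single_apply]; split <;> norm_num
  · rw [Pi.single_apply, if_neg]
    rintro rfl; exact ha hd

end Repr

section GaleAux
variable {𝔇 ℜ : Type*} [Fintype 𝔇] [Fintype ℜ] [DecidableEq 𝔇] [DecidableEq ℜ]

def idxSet (I : Set 𝔇) (J : Set ℜ) : Set (𝔇 ⊕ ℜ) := Sum.inl '' I ∪ Sum.inr '' J

lemma genSet_eq (I : Set 𝔇) (J : Set ℜ) :
    genSet I J = (fun d => Pi.single d (1:ℚ)) '' idxSet I J := by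
  rw [idxSet, Set.image_union, Set.image_image, Set.image_image]; rfl

lemma idxSet_compl (I : Set 𝔇) (J : Set ℜ) : idxSet Iᶜ Jᶜ = (idxSet I J)ᶜ := by
  ext d
  cases d <;> simp [idxSet]

end GaleAux


/-- There is a linear form on `E` vanishing on `ker ψ` which separates the cones
`δ₁ = cone({e_D : D ∈ I₁ ∪ J₁})` and `δ₂ = cone({e_D : D ∈ I₂ ∪ J₂})` with
`δ₁ ∩ ker e = δ₁ ∩ δ₂ = δ₂ ∩ ker e` if and only if the relative interiors of the
φ-cones `τ₁ = cone(φ({e_D : D ∈ I₁ᶜ ∪ J₁ᶜ}))` and `τ₂ = cone(φ({e_D : D ∈ I₂ᶜ ∪ J₂ᶜ}))`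
intersect. -/
theorem separating_form_iff_relint_meet {𝔇 ℜ N K : Type*} [Fintype 𝔇] [Fintype ℜ] [DecidableEq 𝔇] [DecidableEq ℜ]
    [AddCommGroup N] [Module ℚ N] [FiniteDimensional ℚ N]
    [AddCommGroup K] [Module ℚ K] [FiniteDimensional ℚ K]
    (G : GaleSetup 𝔇 ℜ N K)
    (I₁ I₂ : Set 𝔇) (J₁ J₂ : Set ℜ) :
    (∃ e : ((𝔇 ⊕ ℜ) → ℚ) →ₗ[ℚ] ℚ,
      (∀ x ∈ LinearMap.ker G.ψ, e x = 0) ∧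
      (∀ x ∈ coneHull ℚ (genSet I₁ J₁), 0 ≤ e x) ∧
      (∀ x ∈ coneHull ℚ (genSet I₂ J₂), e x ≤ 0) ∧
      coneHull ℚ (genSet I₁ J₁) ∩ {x | e x = 0} =
        coneHull ℚ (genSet I₁ J₁) ∩ coneHull ℚ (genSet I₂ J₂) ∧
      coneHull ℚ (genSet I₂ J₂) ∩ {x | e x = 0} =
        coneHull ℚ (genSet I₁ J₁) ∩ coneHull ℚ (genSet I₂ J₂)) ↔
    (coneRelint ℚ (coneHull ℚ (G.φ '' genSet I₁ᶜ J₁ᶜ)) ∩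
      coneRelint ℚ (coneHull ℚ (G.φ '' genSet I₂ᶜ J₂ᶜ))).Nonempty := by
  classical
  set S₁ : Set (𝔇 ⊕ ℜ) := idxSet I₁ J₁ with hS₁
  set S₂ : Set (𝔇 ⊕ ℜ) := idxSet I₂ J₂ with hS₂
  have hg1 : genSet I₁ J₁ = (fun d => Pi.single d (1:ℚ)) '' S₁ := genSet_eq I₁ J₁
  have hg2 : genSet I₂ J₂ = (fun d => Pi.single d (1:ℚ)) '' S₂ := genSet_eq I₂ J₂
  have hc1 : genSet I₁ᶜ J₁ᶜ = (fun d => Pi.single d (1:ℚ)) '' S₁ᶜ := by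
    rw [genSet_eq, idxSet_compl]
  have hc2 : genSet I₂ᶜ J₂ᶜ = (fun d => Pi.single d (1:ℚ)) '' S₂ᶜ := by
    rw [genSet_eq, idxSet_compl]
  rw [hg1, hg2, hc1, hc2]
  constructor
  · rintro ⟨e, heker, he1, he2, heq1, heq2⟩
    set w : (𝔇 ⊕ ℜ) → ℚ := fun d => e (Pi.single d 1) with hwdef
    have hw12 : ∀ d, d ∈ S₁ → d ∈ S₂ → w d = 0 := by
      intro d h1 h2
      have hmem : (Pi.single d 1 : (𝔇 ⊕ ℜ) → ℚ) ∈
          coneHull ℚ ((fun d => Pi.single d (1:ℚ)) '' S₁) ∩ {x | e x = 0} := by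
        rw [heq1]
        exact ⟨single_mem_coneHull S₁ h1, single_mem_coneHull S₂ h2⟩
      exact hmem.2
    have hw1pos : ∀ d, d ∈ S₁ → d ∉ S₂ → 0 < w d := by
      intro d h1 h2
      rcases lt_or_eq_of_le (he1 _ (single_mem_coneHull S₁ h1)) with h | h
      · exact h
      · exfalso
        have hmem : (Pi.single d 1 : (𝔇 ⊕ ℜ) → ℚ) ∈
            coneHull ℚ ((fun d => Pi.single d (1:ℚ)) '' S₁) ∩ {x | e x = 0} :=
          ⟨single_mem_coneHull S₁ h1, h.symm⟩
        rw [heq1] at hmem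
        have := ((mem_coneHull_single_iff S₂ _).mp hmem.2).2 d h2
        simp [Pi.single_apply] at this
    have hw2neg : ∀ d, d ∈ S₂ → d ∉ S₁ → w d < 0 := by
      intro d h2 h1
      rcases lt_or_eq_of_le (he2 _ (single_mem_coneHull S₂ h2)) with h | h
      · exact h
      · exfalso
        have hmem : (Pi.single d 1 : (𝔇 ⊕ ℜ) → ℚ) ∈
            coneHull ℚ ((fun d => Pi.single d (1:ℚ)) '' S₂) ∩ {x | e x = 0} :=
          ⟨single_mem_coneHull S₂ h2, h⟩
        rw [heq2] at hmem
        have := ((mem_coneHull_single_iff S₁ _).mp hmem.1).2 d h1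
        simp [Pi.single_apply] at this
    have hwker : w ∈ LinearMap.ker G.φ := by
      rw [G.ker_dual]
      intro y hy
      have h0 : e y = 0 := heker y hy
      rw [linearMap_pi_apply e y] at h0
      rw [← h0]
      exact Finset.sum_congr rfl fun d _ => by rw [smul_eq_mul, mul_comm]
    set u : (𝔇 ⊕ ℜ) → ℚ :=
      fun d => if d ∈ S₁ then 0 else if d ∈ S₂ then -w d else 1 + max 0 (-w d) with hu
    set v : (𝔇 ⊕ ℜ) → ℚ := u + w with hv
    have hφuv : G.φ u = G.φ v := by
      have hker : G.φ w = 0 := hwker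
      rw [hv, map_add, hker, add_zero]
    refine ⟨G.φ v, (mem_coneRelint_phi_iff G.φ S₁ _).mpr ⟨u, ?_, ?_, hφuv.symm⟩,
      (mem_coneRelint_phi_iff G.φ S₂ _).mpr ⟨v, ?_, ?_, rfl⟩⟩
    · intro d hd
      by_cases h2 : d ∈ S₂
      · simp only [hu, if_neg hd, if_pos h2]
        linarith [hw2neg d h2 hd]
      · simp only [hu, if_neg hd, if_neg h2]
        have := le_max_left (0:ℚ) (-w d)
        linarith
    · intro d hd
      simp [hu, hd]
    · intro d hd
      by_cases h1 : d ∈ S₁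
      · simp only [hv, Pi.add_apply, hu, if_pos h1, zero_add]
        exact hw1pos d h1 hd
      · simp only [hv, Pi.add_apply, hu, if_neg h1, if_neg hd]
        have := le_max_right (0:ℚ) (-w d)
        linarith
    · intro d hd
      by_cases h1 : d ∈ S₁
      · simp only [hv, Pi.add_apply, hu, if_pos h1, zero_add]
        exact hw12 d h1 hd
      · simp only [hv, Pi.add_apply, hu, if_neg h1, if_pos hd]
        ring
  · rintro ⟨x, hx1, hx2⟩
    obtain ⟨u, hu_pos, hu_zero, rfl⟩ := (mem_coneRelint_phi_iff G.φ S₁ x).mp hx1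
    obtain ⟨v, hv_pos, hv_zero, hxv⟩ := (mem_coneRelint_phi_iff G.φ S₂ _).mp hx2
    set w : (𝔇 ⊕ ℜ) → ℚ := v - u with hwdef
    have hwker : w ∈ LinearMap.ker G.φ := by
      rw [LinearMap.mem_ker, hwdef, map_sub, ← hxv, sub_self]
    have hu0 : ∀ d, 0 ≤ u d := by
      intro d
      by_cases hd : d ∈ S₁
      · simp [hu_zero d hd]
      · exact (hu_pos d hd).le
    have hv0 : ∀ d, 0 ≤ v d := by
      intro d
      by_cases hd : d ∈ S₂
      · simp [hv_zero d hd]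
      · exact (hv_pos d hd).le
    have hw1 : ∀ d ∈ S₁, 0 ≤ w d := by
      intro d hd
      simp only [hwdef, Pi.sub_apply, hu_zero d hd, sub_zero]
      exact hv0 d
    have hw2 : ∀ d ∈ S₂, w d ≤ 0 := by
      intro d hd
      simp only [hwdef, Pi.sub_apply, hv_zero d hd, zero_sub, neg_nonpos]
      exact hu0 d
    have hw12 : ∀ d, d ∈ S₁ → d ∈ S₂ → w d = 0 := by
      intro d h1 h2
      simp [hwdef, hu_zero d h1, hv_zero d h2]
    have hw1pos : ∀ d, d ∈ S₁ → d ∉ S₂ → 0 < w d := by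
      intro d h1 h2
      simp only [hwdef, Pi.sub_apply, hu_zero d h1, sub_zero]
      exact hv_pos d h2
    have hw2neg : ∀ d, d ∈ S₂ → d ∉ S₁ → w d < 0 := by
      intro d h2 h1
      simp only [hwdef, Pi.sub_apply, hv_zero d h2, zero_sub, neg_neg, neg_lt_zero]
      exact hu_pos d h1
    set e : ((𝔇 ⊕ ℜ) → ℚ) →ₗ[ℚ] ℚ :=
      ∑ d, w d • (LinearMap.proj d : ((𝔇 ⊕ ℜ) → ℚ) →ₗ[ℚ] ℚ) with he
    have he_apply : ∀ x : (𝔇 ⊕ ℜ) → ℚ, e x = ∑ d, w d * x d := by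
      intro x
      rw [he, LinearMap.sum_apply]
      exact Finset.sum_congr rfl fun d _ => by
        rw [LinearMap.smul_apply, LinearMap.proj_apply, smul_eq_mul]
    have hnn1 : ∀ x ∈ coneHull ℚ ((fun d => Pi.single d (1:ℚ)) '' S₁),
        ∀ d, 0 ≤ w d * x d := by
      intro x hx d
      rw [mem_coneHull_single_iff] at hx
      by_cases hd : d ∈ S₁
      · exact mul_nonneg (hw1 d hd) (hx.1 d)
      · simp [hx.2 d hd]
    have hnp2 : ∀ x ∈ coneHull ℚ ((fun d => Pi.single d (1:ℚ)) '' S₂),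
        ∀ d, w d * x d ≤ 0 := by
      intro x hx d
      rw [mem_coneHull_single_iff] at hx
      by_cases hd : d ∈ S₂
      · exact mul_nonpos_iff.mpr (Or.inr ⟨hw2 d hd, hx.1 d⟩)
      · simp [hx.2 d hd]
    have hzero_on_inter : ∀ x, x ∈ coneHull ℚ ((fun d => Pi.single d (1:ℚ)) '' S₁) →
        x ∈ coneHull ℚ ((fun d => Pi.single d (1:ℚ)) '' S₂) → e x = 0 := by
      intro x hx1' hx2'
      rw [mem_coneHull_single_iff] at hx1' hx2'
      rw [he_apply]
      refine Finset.sum_eq_zero fun d _ => ?_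
      by_cases h1 : d ∈ S₁
      · by_cases h2 : d ∈ S₂
        · rw [hw12 d h1 h2, zero_mul]
        · rw [hx2'.2 d h2, mul_zero]
      · rw [hx1'.2 d h1, mul_zero]
    refine ⟨e, ?_, ?_, ?_, ?_, ?_⟩
    · intro y hy
      rw [he_apply]
      exact (G.ker_dual w).mp hwker y hy
    · intro x hx
      rw [he_apply]
      exact Finset.sum_nonneg fun d _ => hnn1 x hx d
    · intro x hx
      rw [he_apply]
      exact Finset.sum_nonpos fun d _ => hnp2 x hx d
    · ext x
      simp only [Set.mem_inter_iff, Set.mem_setOf_eq]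
      constructor
      · rintro ⟨hxc, hxe⟩
        refine ⟨hxc, ?_⟩
        rw [he_apply] at hxe
        have hzero := (Finset.sum_eq_zero_iff_of_nonneg
          (fun d _ => hnn1 x hxc d)).mp hxe
        rw [mem_coneHull_single_iff] at hxc ⊢
        refine ⟨hxc.1, fun d hd => ?_⟩
        by_cases h1 : d ∈ S₁
        · have hwd : w d ≠ 0 := ne_of_gt (hw1pos d h1 hd)
          rcases mul_eq_zero.mp (hzero d (Finset.mem_univ d)) with h | h
          · exact absurd h hwd
          · exact h
        · exact hxc.2 d h1
      · rintro ⟨hxc1, hxc2⟩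
        exact ⟨hxc1, hzero_on_inter x hxc1 hxc2⟩
    · ext x
      simp only [Set.mem_inter_iff, Set.mem_setOf_eq]
      constructor
      · rintro ⟨hxc, hxe⟩
        refine ⟨?_, hxc⟩
        rw [he_apply] at hxe
        have hzero := (Finset.sum_eq_zero_iff_of_nonpos
          (fun d _ => hnp2 x hxc d)).mp hxe
        rw [mem_coneHull_single_iff] at hxc ⊢
        refine ⟨hxc.1, fun d hd => ?_⟩
        by_cases h2 : d ∈ S₂
        · have hwd : w d ≠ 0 := ne_of_lt (hw2neg d h2 hd)
          rcases mul_eq_zero.mp (hzero d (Finset.mem_univ d)) with h | h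
          · exact absurd h hwd
          · exact h
        · exact hxc.2 d h2
      · rintro ⟨hxc1, hxc2⟩
        exact ⟨hxc2, hzero_on_inter x hxc1 hxc2⟩
end

section
/- In the Gale duality setup, for I ⊆ 𝔇 and J ⊆ ℜ, the family of vectors (ψ(e_D))_{D ∈ I∪J} is linearly independent in N_ℚ if and only if the φ-cone cone(φ({e_D : D ∈ I^c∪J^c})) has full dimension dim K_ℚ in K_ℚ. -/
open Set

open Set

set_option linter.unusedSectionVars false

section Aux

variable {α : Type*} [Fintype α] [DecidableEq α]

/-- The coordinate subspace of functions supported on `T`. -/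
def coordSub (T : Set α) : Submodule ℚ (α → ℚ) where
  carrier := {x | ∀ d ∉ T, x d = 0}
  add_mem' hx hy d hd := by simp [hx d hd, hy d hd]
  zero_mem' d hd := rfl
  smul_mem' c x hx d hd := by simp [hx d hd]

lemma mem_coordSub {T : Set α} {x : α → ℚ} : x ∈ coordSub T ↔ ∀ d ∉ T, x d = 0 := Iff.rfl

lemma span_singles (T : Set α) :
    Submodule.span ℚ ((fun d => Pi.single d (1 : ℚ)) '' T) = coordSub T := by
  apply le_antisymm
  · rw [Submodule.span_le]
    rintro _ ⟨d, hd, rfl⟩ e he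
    have : e ≠ d := fun h => he (h ▸ hd)
    simp [Pi.single_apply, this]
  · intro x hx
    have hxx : x = ∑ d, x d • (Pi.single d (1 : ℚ) : α → ℚ) := by
      ext e
      simp [Finset.sum_apply, Pi.single_apply]
    rw [hxx]
    refine Submodule.sum_mem _ fun d _ => ?_
    by_cases hd : d ∈ T
    · exact Submodule.smul_mem _ _ (Submodule.subset_span ⟨d, hd, rfl⟩)
    · simp [hx d hd]

/-- The standard dot product as a bilinear form on `α → ℚ`. -/
def dotB (α : Type*) [Fintype α] : LinearMap.BilinForm ℚ (α → ℚ) :=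
  LinearMap.mk₂ ℚ (fun x y => ∑ d, x d * y d)
    (fun x x' y => by simp [add_mul, Finset.sum_add_distrib])
    (fun c x y => by simp [Finset.mul_sum, mul_assoc])
    (fun x y y' => by simp [mul_add, Finset.sum_add_distrib])
    (fun c x y => by simp [Finset.mul_sum, mul_assoc, mul_left_comm])

lemma dotB_apply (x y : α → ℚ) : dotB α x y = ∑ d, x d * y d := rfl

lemma dotB_refl : (dotB α).IsRefl := by
  intro x y h
  rw [dotB_apply] at h ⊢
  rw [← h]
  exact Finset.sum_congr rfl fun d _ => mul_comm _ _

lemma dotB_nondeg : (dotB α).Nondegenerate := by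
  constructor
  all_goals
    intro x hx
    have h := hx x
    rw [dotB_apply] at h
    funext d
    have := (Finset.sum_eq_zero_iff_of_nonneg (fun d _ => mul_self_nonneg (x d))).1 h d
      (Finset.mem_univ d)
    exact mul_self_eq_zero.1 this

lemma dotB_orthogonal_sup (A C : Submodule ℚ (α → ℚ)) :
    (dotB α).orthogonal (A ⊔ C) = (dotB α).orthogonal A ⊓ (dotB α).orthogonal C := by
  ext x
  simp only [LinearMap.BilinForm.mem_orthogonal_iff, Submodule.mem_inf]
  constructor
  · exact fun h => ⟨fun n hn => h n (Submodule.mem_sup_left hn),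
      fun n hn => h n (Submodule.mem_sup_right hn)⟩
  · rintro ⟨hA, hC⟩ n hn
    rcases Submodule.mem_sup.1 hn with ⟨a, ha, c, hc, rfl⟩
    have : dotB α (a + c) x = dotB α a x + dotB α c x := by
      rw [map_add]; rfl
    simpa [LinearMap.BilinForm.IsOrtho, this, hA a ha, hC c hc] using
      (by rw [hA a ha, hC c hc, add_zero] : dotB α a x + dotB α c x = 0)

lemma dotB_orthogonal_coordSub (T : Set α) :
    (dotB α).orthogonal (coordSub Tᶜ) = coordSub T := by
  ext x
  simp only [LinearMap.BilinForm.mem_orthogonal_iff, mem_coordSub]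
  constructor
  · intro h d hd
    have hmem : (Pi.single d (1 : ℚ)) ∈ coordSub Tᶜ := by
      intro e he
      have : e ≠ d := fun hh => he (by simpa [hh] using hd)
      simp [Pi.single_apply, this]
    have := h _ hmem
    rw [dotB_apply] at this
    simpa [Pi.single_apply] using this
  · intro h n hn
    rw [dotB_apply]
    refine Finset.sum_eq_zero fun d _ => ?_
    by_cases hd : d ∈ T
    · rw [hn d (by simpa using hd), zero_mul]
    · rw [h d hd, mul_zero]

lemma span_coneHull (k : Type*) [Field k] [LinearOrder k] [IsStrictOrderedRing k] {W : Type*} [AddCommGroup W]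
    [Module k W] (S : Set W) :
    Submodule.span k (coneHull k S) = Submodule.span k S := by
  apply le_antisymm
  · rw [Submodule.span_le]
    rintro x ⟨n, c, v, _, hv, rfl⟩
    exact Submodule.sum_mem _ fun i _ =>
      Submodule.smul_mem _ _ (Submodule.subset_span (hv i))
  · apply Submodule.span_mono
    intro x hx
    exact ⟨1, fun _ => 1, fun _ => x, fun _ => zero_le_one, fun _ => hx, by simp⟩

end Aux

/-- The family `(ψ(e_D))_{D ∈ I ∪ J}` is linearly independent in `N` if and only if the
φ-cone `cone(φ({e_D : D ∈ Iᶜ ∪ Jᶜ}))` has full dimension `dim K` in `K`. -/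
theorem linearIndependent_iff_fullDim {𝔇 ℜ N K : Type*} [Fintype 𝔇] [Fintype ℜ] [DecidableEq 𝔇] [DecidableEq ℜ]
    [AddCommGroup N] [Module ℚ N] [FiniteDimensional ℚ N]
    [AddCommGroup K] [Module ℚ K] [FiniteDimensional ℚ K]
    (G : GaleSetup 𝔇 ℜ N K)
    (I : Set 𝔇) (J : Set ℜ) :
    LinearIndependent ℚ
      (fun d : ((Sum.inl '' I ∪ Sum.inr '' J : Set (𝔇 ⊕ ℜ))) =>
        G.ψ (Pi.single (d : 𝔇 ⊕ ℜ) 1)) ↔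
    Module.finrank ℚ (Submodule.span ℚ (coneHull ℚ (G.φ '' genSet Iᶜ Jᶜ))) =
      Module.finrank ℚ K := by
  classical
  have hcompl : (Sum.inl '' I ∪ Sum.inr '' J : Set (𝔇 ⊕ ℜ))ᶜ =
      Sum.inl '' Iᶜ ∪ Sum.inr '' Jᶜ := by
    ext d; cases d <;> simp
  have hgen : genSet Iᶜ Jᶜ =
      (fun d : 𝔇 ⊕ ℜ => Pi.single d (1 : ℚ)) '' (Sum.inl '' I ∪ Sum.inr '' J)ᶜ := by
    rw [hcompl, Set.image_union, genSet, Set.image_image, Set.image_image]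
  have hspan : Submodule.span ℚ (coneHull ℚ (G.φ '' genSet Iᶜ Jᶜ))
      = Submodule.map G.φ (coordSub (Sum.inl '' I ∪ Sum.inr '' J)ᶜ) := by
    rw [span_coneHull, Submodule.span_image, hgen, span_singles]
  have hker : LinearMap.ker G.φ = (dotB (𝔇 ⊕ ℜ)).orthogonal (LinearMap.ker G.ψ) := by
    ext x
    rw [G.ker_dual]
    simp only [LinearMap.BilinForm.mem_orthogonal_iff, LinearMap.BilinForm.IsOrtho, dotB_apply]
    constructor
    · intro h n hn; rw [← h n hn]; exact Finset.sum_congr rfl fun d _ => mul_comm _ _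
    · intro h n hn; rw [← h n hn]; exact Finset.sum_congr rfl fun d _ => mul_comm _ _
  have hker' : LinearMap.ker G.ψ = (dotB (𝔇 ⊕ ℜ)).orthogonal (LinearMap.ker G.φ) := by
    rw [hker, LinearMap.BilinForm.orthogonal_orthogonal dotB_nondeg dotB_refl]
  have hkey : (dotB (𝔇 ⊕ ℜ)).orthogonal
        (coordSub (Sum.inl '' I ∪ Sum.inr '' J)ᶜ ⊔ LinearMap.ker G.φ)
      = coordSub (Sum.inl '' I ∪ Sum.inr '' J) ⊓ LinearMap.ker G.ψ := by
    rw [dotB_orthogonal_sup, dotB_orthogonal_coordSub, ← hker']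
  have hBequiv : Disjoint (coordSub (Sum.inl '' I ∪ Sum.inr '' J)) (LinearMap.ker G.ψ)
      ↔ coordSub (Sum.inl '' I ∪ Sum.inr '' J)ᶜ ⊔ LinearMap.ker G.φ = ⊤ := by
    rw [disjoint_iff, ← hkey]
    constructor
    · intro h
      have h2 := congrArg ((dotB (𝔇 ⊕ ℜ)).orthogonal) h
      rwa [LinearMap.BilinForm.orthogonal_orthogonal dotB_nondeg dotB_refl,
        LinearMap.BilinForm.orthogonal_bot] at h2
    · intro h; rw [h]; exact LinearMap.BilinForm.orthogonal_top_eq_bot dotB_nondeg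
  haveI : Fintype ((Sum.inl '' I ∪ Sum.inr '' J : Set (𝔇 ⊕ ℜ))) :=
    (Set.toFinite _).fintype
  have hrange : Set.range
        (fun d : ((Sum.inl '' I ∪ Sum.inr '' J : Set (𝔇 ⊕ ℜ))) =>
          (Pi.single (d : 𝔇 ⊕ ℜ) (1 : ℚ) : (𝔇 ⊕ ℜ) → ℚ))
      = (fun d : 𝔇 ⊕ ℜ => Pi.single d (1 : ℚ)) '' (Sum.inl '' I ∪ Sum.inr '' J) :=
    (Set.image_eq_range (fun d : 𝔇 ⊕ ℜ => (Pi.single d (1 : ℚ) : (𝔇 ⊕ ℜ) → ℚ))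
      (Sum.inl '' I ∪ Sum.inr '' J)).symm
  have hLHS : (LinearIndependent ℚ
      (fun d : ((Sum.inl '' I ∪ Sum.inr '' J : Set (𝔇 ⊕ ℜ))) =>
        G.ψ (Pi.single (d : 𝔇 ⊕ ℜ) 1)))
      ↔ Disjoint (coordSub (Sum.inl '' I ∪ Sum.inr '' J)) (LinearMap.ker G.ψ) := by
    constructor
    · intro h
      rw [Submodule.disjoint_def]
      intro x hx hxker
      rw [← span_singles (Sum.inl '' I ∪ Sum.inr '' J), ← hrange] at hx
      obtain ⟨c, hc⟩ := (Submodule.mem_span_range_iff_exists_fun ℚ).1 hx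
      have h0 : ∑ i, c i • G.ψ (Pi.single (i : 𝔇 ⊕ ℜ) 1) = 0 := by
        simp_rw [← map_smul, ← map_sum]
        rw [hc]
        exact hxker
      have hc0 := Fintype.linearIndependent_iff.1 h c h0
      rw [← hc]
      simp [hc0]
    · intro hdisj
      rw [Fintype.linearIndependent_iff]
      intro c h0
      set x : (𝔇 ⊕ ℜ) → ℚ :=
        ∑ i, c i • (Pi.single (i : 𝔇 ⊕ ℜ) (1 : ℚ) : (𝔇 ⊕ ℜ) → ℚ) with hx
      have hxmem : x ∈ coordSub (Sum.inl '' I ∪ Sum.inr '' J) := by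
        rw [← span_singles (Sum.inl '' I ∪ Sum.inr '' J), ← hrange]
        exact (Submodule.mem_span_range_iff_exists_fun ℚ).2 ⟨c, rfl⟩
      have hxker : x ∈ LinearMap.ker G.ψ := by
        rw [LinearMap.mem_ker, hx, map_sum]
        simp_rw [map_smul]
        exact h0
      have hx0 : x = 0 := Submodule.disjoint_def.1 hdisj x hxmem hxker
      intro i
      have : x (i : 𝔇 ⊕ ℜ) = c i := by
        rw [hx]
        simp [Finset.sum_apply, Pi.single_apply, Subtype.coe_inj, Finset.sum_ite_eq]
      rw [hx0] at this
      exact this.symm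
  rw [hLHS, hBequiv, hspan]
  constructor
  · intro h
    rw [(LinearMap.map_eq_top_iff (LinearMap.range_eq_top.2 G.φ_surj)).2 h]
    exact finrank_top ℚ K
  · intro h
    rw [← LinearMap.map_eq_top_iff (LinearMap.range_eq_top.2 G.φ_surj)]
    exact Submodule.eq_top_of_finrank_eq h
end
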